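/- arXiv:1605.05469 — 4 statements merged into one kernel-verified Lean document; each statement's English description precedes it below -/
import Mathlib

section
/- For q ∈ ℂ with 0 < |q| ≤ c₀ (where c₀ satisfies 2·∑_{ν=1}^∞ c₀^{ν²/2} = 1), the function x ↦ θ(q,x) = ∑_{j=0}^∞ q^{j(j+1)/2} x^j has no multiple zeros; i.e., there is no x ∈ ℂ with θ(q,x) = 0 and θ_x(q,x) = 0. -/
/-!
On the circle `‖x‖ = ‖q‖ ^ (-(m + 1/2))` the term `q ^ (m(m+1)/2) * x ^ m` dominates the rest of
the series: relative to it, the `j`-th term has modulus `‖q‖ ^ ((j - m)² / 2)`, and these ratios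
add up to less than `2 ∑_{ν ≥ 1} c₀ ^ (ν² / 2) = 1`. By Rouché's theorem and the argument
principle, `θ(q, ·)` has exactly `m` zeros, counted with multiplicity, in the closed disc bounded
by that circle. A multiple zero would therefore make the count jump by at least two between
consecutive circles (or exceed zero inside the first one), while it only jumps by one.
-/

open Complex

/-- The partial theta function θ(q,x) = ∑_{j=0}^∞ q^{j(j+1)/2} x^j. -/
noncomputable def theta (q x : ℂ) : ℂ := ∑' j : ℕ, q ^ (j * (j + 1) / 2) * x ^ j

open Metric Set Filter Topology MeromorphicOn
open scoped Real

theorem AnalyticAt.eventuallyEq_of_codiscreteWithin {f g : ℂ → ℂ} {U : Set ℂ} {z : ℂ}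
    (hf : AnalyticAt ℂ f z) (hg : AnalyticAt ℂ g z) (hfg : f =ᶠ[codiscreteWithin U] g)
    (hzU : z ∈ U) (hz : ∃ᶠ y in 𝓝[≠] z, y ∈ U) : f =ᶠ[𝓝 z] g := by
  refine (hf.frequently_eq_iff_eventually_eq hg).mp ?_
  have := mem_codiscreteWithin_iff_forall_mem_nhdsNE.mp hfg z hzU
  exact (hz.and_eventually this).mono fun y ⟨hyU, hy⟩ => hy.resolve_right (not_not_intro hyU)

lemma frequently_mem_closedBall_of_mem_sphere {c z : ℂ} {R : ℝ} (hR : R ≠ 0)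
    (hz : z ∈ sphere c R) : ∃ᶠ y in 𝓝[≠] z, y ∈ closedBall c R := by
  have : z ∈ closure (ball c R) := by rw [closure_ball c hR]; exact sphere_subset_closedBall hz
  rw [frequently_nhdsWithin_iff]
  refine (mem_closure_iff_frequently.mp this).mono fun y hy => ⟨ball_subset_closedBall hy, ?_⟩
  rintro rfl
  exact (ne_of_lt (mem_ball.mp hy)) (mem_sphere.mp hz)

lemma logDeriv_finprod_sub_zpow {d : ℂ → ℤ} (hd : d.support.Finite) {z : ℂ} (hz : d z = 0) :
    logDeriv (fun x => ∏ᶠ u, (x - u) ^ d u) z = ∑ᶠ u, d u * (z - u)⁻¹ := by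
  have hprod : (fun x => ∏ᶠ u, (x - u) ^ d u) = fun x => ∏ u ∈ hd.toFinset, (x - u) ^ d u :=
    funext fun x => finprod_eq_prod_of_mulSupport_subset _ fun u hu => by
      contrapose! hu
      simp_all
  have hzu : ∀ u ∈ hd.toFinset, z - u ≠ 0 := fun u hu =>
    sub_ne_zero.mpr fun h => by simp_all
  rw [hprod, logDeriv_prod (f := fun u x => (x - u) ^ d u) (fun u hu => zpow_ne_zero _ (hzu u hu))
    fun u hu => (differentiableAt_id.sub_const u).zpow (.inl (hzu u hu)),
    finsum_eq_sum_of_support_subset _ (s := hd.toFinset) fun u hu => by simp_all]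
  refine Finset.sum_congr rfl fun u _ => ?_
  rw [logDeriv_fun_zpow (by fun_prop)]
  simp [logDeriv_apply]

section ArgumentPrinciple

variable {f : ℂ → ℂ} {c : ℂ} {R : ℝ}

lemma circleIntegrable_logDeriv (hR : 0 ≤ R) (hf : ∀ z ∈ sphere c R, AnalyticAt ℂ f z)
    (h₀ : ∀ z ∈ sphere c R, f z ≠ 0) : CircleIntegrable (logDeriv f) c R :=
  ContinuousOn.circleIntegrable hR fun z hz =>
    ((hf z hz).deriv.continuousAt.div (hf z hz).continuousAt (h₀ z hz)).continuousWithinAt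

lemma mem_ball_of_divisor_ne_zero (hf : AnalyticOnNhd ℂ f (closedBall c R))
    (h₀ : ∀ z ∈ sphere c R, f z ≠ 0) {u : ℂ} (hu : divisor f (closedBall c R) u ≠ 0) :
    u ∈ ball c R := by
  have huU := (divisor f (closedBall c R)).supportWithinDomain hu
  refine lt_of_le_of_ne (mem_closedBall.mp huU) fun h => h₀ u (mem_sphere.mpr h) ?_
  by_contra hfu
  simp [divisor_apply hf.meromorphicOn huU, (hf u huU).meromorphicOrderAt_eq,
    (hf u huU).analyticOrderAt_eq_zero.mpr hfu] at hu

lemma circleIntegral_logDeriv_eq_zero {g : ℂ → ℂ} (hR : 0 ≤ R)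
    (hg : AnalyticOnNhd ℂ g (closedBall c R)) (hg₀ : ∀ z ∈ closedBall c R, g z ≠ 0) :
    ∮ z in C(c, R), logDeriv g z = 0 :=
  DiffContOnCl.circleIntegral_eq_zero hR <| DifferentiableOn.diffContOnCl_ball (fun z hz =>
    ((hg z hz).deriv.div (hg z hz) (hg₀ z hz)).differentiableAt.differentiableWithinAt) subset_rfl

lemma exists_logDeriv_eqOn_sphere (hR : 0 < R) (hf : AnalyticOnNhd ℂ f (closedBall c R))
    (h₀ : ∀ z ∈ sphere c R, f z ≠ 0) :
    ∃ g : ℂ → ℂ, AnalyticOnNhd ℂ g (closedBall c R) ∧ (∀ z ∈ closedBall c R, g z ≠ 0) ∧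
      EqOn (logDeriv f) (fun z => ∑ᶠ u, divisor f (closedBall c R) u * (z - u)⁻¹ + logDeriv g z)
        (sphere c R) := by
  set D := divisor f (closedBall c R)
  have hD : D.support.Finite := D.finiteSupport (isCompact_closedBall c R)
  have hz₀ : c + R ∈ sphere c R := by simp [abs_of_pos hR]
  have hord : ∀ u : closedBall c R, meromorphicOrderAt f u ≠ ⊤ := fun u =>
    hf.meromorphicOn.meromorphicOrderAt_ne_top_of_isPreconnected
      (convex_closedBall c R).isPreconnected (sphere_subset_closedBall hz₀) u.2 (by
        simp [(hf _ (sphere_subset_closedBall hz₀)).meromorphicOrderAt_eq,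
          (hf _ (sphere_subset_closedBall hz₀)).analyticOrderAt_eq_zero.mpr (h₀ _ hz₀)])
  -- The factorization holds only off a discrete subset of the disc; near the circle it is upgraded
  -- to a genuine identity by analytic continuation (`eventuallyEq_of_codiscreteWithin`).
  obtain ⟨g, hg, hg₀, hfg⟩ := hf.meromorphicOn.extract_zeros_poles hord hD
  rw [Function.FactorizedRational.finprod_eq_fun hD] at hfg
  refine ⟨g, hg, fun z hz => hg₀ ⟨z, hz⟩, fun z hz => ?_⟩
  have hzU := sphere_subset_closedBall hz
  have hDz : D z = 0 := by_contra fun h => (mem_ball.mp (mem_ball_of_divisor_ne_zero hf h₀ h)).ne hz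
  have hP := Function.FactorizedRational.analyticAt (d := D) (x := z) hDz.ge
  have hPz := Function.FactorizedRational.ne_zero (d := D) hDz
  rw [Function.FactorizedRational.finprod_eq_fun hD] at hP hPz
  have hloc : f =ᶠ[𝓝 z] fun x => (∏ᶠ u, (x - u) ^ D u) * g x :=
    (hf z hzU).eventuallyEq_of_codiscreteWithin (hP.mul (hg z hzU)) hfg hzU
      (frequently_mem_closedBall_of_mem_sphere hR.ne' hz)
  rw [(logDeriv_congr_nhds hloc).eq_of_nhds, logDeriv_mul z hPz (hg₀ ⟨z, hzU⟩)
    hP.differentiableAt (hg z hzU).differentiableAt, logDeriv_finprod_sub_zpow hD hDz]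

theorem circleIntegral_logDeriv_eq_finsum_divisor (hR : 0 < R)
    (hf : AnalyticOnNhd ℂ f (closedBall c R)) (h₀ : ∀ z ∈ sphere c R, f z ≠ 0) :
    ∮ z in C(c, R), logDeriv f z = 2 * π * I * (∑ᶠ u, divisor f (closedBall c R) u : ℤ) := by
  set D := divisor f (closedBall c R)
  have hD : D.support.Finite := D.finiteSupport (isCompact_closedBall c R)
  have hball : ∀ u ∈ hD.toFinset, u ∈ ball c R := fun u hu =>
    mem_ball_of_divisor_ne_zero hf h₀ (by simpa using hu)
  obtain ⟨g, hg, hg₀, hlog⟩ := exists_logDeriv_eqOn_sphere hR hf h₀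
  have hpole : ∀ u ∈ hD.toFinset, CircleIntegrable (fun z => (D u : ℂ) * (z - u)⁻¹) c R :=
    fun u hu => (circleIntegrable_sub_inv_iff.mpr (.inr fun h => (mem_ball.mp (hball u hu)).ne
      (by rwa [mem_sphere, abs_of_pos hR] at h))).const_smul (a := (D u : ℂ))
  have hg' : CircleIntegrable (logDeriv g) c R := circleIntegrable_logDeriv hR.le
    (fun z hz => hg z (sphere_subset_closedBall hz)) fun z hz => hg₀ z (sphere_subset_closedBall hz)
  have hlog' : EqOn (logDeriv f) (fun z => ∑ u ∈ hD.toFinset, D u * (z - u)⁻¹ + logDeriv g z)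
      (sphere c R) := fun z hz => by
    simp only [hlog hz]
    rw [finsum_eq_sum_of_support_subset _ (s := hD.toFinset) fun u hu => by simp_all [D]]
  have hpoles : CircleIntegrable (fun z => ∑ u ∈ hD.toFinset, (D u : ℂ) * (z - u)⁻¹) c R := by
    simpa only [Finset.sum_fn] using CircleIntegrable.sum _ hpole
  rw [circleIntegral.integral_congr hR.le hlog', circleIntegral.integral_add hpoles hg',
    circleIntegral.integral_fun_sum hpole, circleIntegral_logDeriv_eq_zero hR.le hg hg₀, add_zero,
    finsum_eq_sum_of_support_subset _ (s := hD.toFinset) (by simp), Int.cast_sum,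
    Finset.mul_sum]
  refine Finset.sum_congr rfl fun u hu => ?_
  rw [circleIntegral.integral_const_mul, circleIntegral.integral_sub_inv_of_mem_ball (hball u hu)]
  ring

theorem circleIntegral_logDeriv_eq_of_norm_sub_lt {g : ℂ → ℂ} (hR : 0 ≤ R)
    (hf : ∀ z ∈ sphere c R, AnalyticAt ℂ f z) (hg : ∀ z ∈ sphere c R, AnalyticAt ℂ g z)
    (h : ∀ z ∈ sphere c R, ‖f z - g z‖ < ‖g z‖) :
    ∮ z in C(c, R), logDeriv f z = ∮ z in C(c, R), logDeriv g z := by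
  have hg₀ : ∀ z ∈ sphere c R, g z ≠ 0 := fun z hz hgz => by
    simpa [hgz] using (norm_nonneg _).trans_lt (h z hz)
  have hf₀ : ∀ z ∈ sphere c R, f z ≠ 0 := fun z hz hfz => by simpa [hfz] using h z hz
  set φ : ℂ → ℂ := fun z => f z / g z
  have hφ : ∀ z ∈ sphere c R, AnalyticAt ℂ φ z := fun z hz => (hf z hz).div (hg z hz) (hg₀ z hz)
  have hφ₀ : ∀ z ∈ sphere c R, φ z ≠ 0 := fun z hz => div_ne_zero (hf₀ z hz) (hg₀ z hz)
  have hsplit : EqOn (logDeriv f) (fun z => logDeriv g z + logDeriv φ z) (sphere c R) :=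
    fun z hz => by
      rw [← sub_eq_iff_eq_add', eq_comm]
      exact logDeriv_div z (hf₀ z hz) (hg₀ z hz) (hf z hz).differentiableAt
        (hg z hz).differentiableAt
  -- `log ∘ φ` is a primitive of `logDeriv φ` on the circle, where `φ` takes values in `ball 1 1`.
  have hprim : ∮ z in C(c, R), logDeriv φ z = 0 := by
    refine circleIntegral.integral_eq_zero_of_hasDerivWithinAt' (f := fun z => log (φ z))
      fun z hz => ?_
    rw [abs_of_nonneg hR] at hz
    have hslit : φ z ∈ slitPlane := by
      simpa using mem_slitPlane_of_norm_lt_one (z := φ z - 1) (by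
        rw [div_sub_one (hg₀ z hz), norm_div]
        exact (div_lt_one (norm_pos_iff.mpr (hg₀ z hz))).mpr (h z hz))
    exact ((hφ z hz).differentiableAt.hasDerivAt.clog hslit).hasDerivWithinAt
  rw [circleIntegral.integral_congr hR hsplit, circleIntegral.integral_add
    (circleIntegrable_logDeriv hR hg hg₀) (circleIntegrable_logDeriv hR hφ hφ₀), hprim, add_zero]

lemma circleIntegral_logDeriv_const_mul_pow {a : ℂ} (ha : a ≠ 0) (m : ℕ) (hR : 0 < R) :
    ∮ z in C(0, R), logDeriv (fun z => a * z ^ m) z = 2 * π * I * m := by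
  rw [circleIntegral.integral_congr hR.le (g := fun z => m * (z - 0)⁻¹) fun z _ => by
      simp [logDeriv_const_mul _ _ ha, div_eq_mul_inv],
    circleIntegral.integral_const_mul, circleIntegral.integral_sub_inv_of_mem_ball (by simpa)]
  ring

lemma two_le_divisor_of_deriv_eq_zero {U : Set ℂ} {x : ℂ}
    (hf : AnalyticOnNhd ℂ f U) (hx : x ∈ U) (hfin : analyticOrderAt f x ≠ ⊤) (h₀ : f x = 0)
    (h₁ : deriv f x = 0) : 2 ≤ divisor f U x := by
  have h2 : ((2 : ℕ) : ℕ∞) ≤ analyticOrderAt f x :=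
    (natCast_le_analyticOrderAt_iff_iteratedDeriv_eq_zero (hf x hx)).mpr fun i hi => by
      interval_cases i <;> simpa
  obtain ⟨n, hn⟩ := ENat.ne_top_iff_exists.mp hfin
  rw [AnalyticOnNhd.divisor_apply hf hx, ← hn]
  rw [← hn] at h2
  simpa using h2

lemma divisor_le_finsum_divisor {s : ℝ}
    (hf : AnalyticOnNhd ℂ f (closedBall c s)) (x : ℂ) :
    divisor f (closedBall c s) x ≤ ∑ᶠ u, divisor f (closedBall c s) u :=
  single_le_finsum x ((divisor f _).finiteSupport (isCompact_closedBall c s))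
    (AnalyticOnNhd.divisor_nonneg hf)

lemma finsum_divisor_add_le {x : ℂ} {r s : ℝ}
    (hf : AnalyticOnNhd ℂ f (closedBall c s)) (hxr : x ∉ closedBall c r)
    (hxs : x ∈ closedBall c s) :
    ∑ᶠ u, divisor f (closedBall c r) u + divisor f (closedBall c s) x
      ≤ ∑ᶠ u, divisor f (closedBall c s) u := by
  classical
  set D := divisor f (closedBall c s)
  set E := divisor f (closedBall c r)
  have hrs : closedBall c r ⊆ closedBall c s := closedBall_subset_closedBall
    ((not_le.mp (mt mem_closedBall.mpr hxr)).le.trans (mem_closedBall.mp hxs))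
  have hE : ∀ u, E u = if u ∈ closedBall c r then D u else 0 := fun u => by
    rw [← Function.locallyFinsuppWithin.restrict_apply D hrs, divisor_restrict hf.meromorphicOn hrs]
  have hD := D.finiteSupport (isCompact_closedBall c s)
  have hE' := E.finiteSupport (isCompact_closedBall c r)
  have hrest : Function.HasFiniteSupport fun u => D u - E u :=
    (hD.union hE').subset fun u hu => by
      by_contra h
      simp_all
  calc ∑ᶠ u, E u + D x
      ≤ ∑ᶠ u, E u + ∑ᶠ u, (D u - E u) := by
        gcongr
        refine le_of_eq_of_le (by simp [hE, hxr]) (single_le_finsum x hrest fun u => ?_)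
        rw [hE]
        split_ifs
        · simp
        · simpa using AnalyticOnNhd.divisor_nonneg hf u
    _ = ∑ᶠ u, D u := by
        rw [← finsum_add_distrib hE' hrest]
        simp

end ArgumentPrinciple

lemma norm_tsum_sub_le {ι E : Type*} [NormedAddCommGroup E] [CompleteSpace E] {f : ι → E}
    (hf : Summable fun j => ‖f j‖) (m : ι) :
    ‖∑' j, f j - f m‖ ≤ ∑' j, ‖f j‖ - ‖f m‖ := by
  classical
  rw [hf.of_norm.tsum_eq_add_tsum_ite m, hf.tsum_eq_add_tsum_ite m, add_sub_cancel_left,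
    add_sub_cancel_left]
  refine (norm_tsum_le_tsum_norm ?_).trans_eq (tsum_congr fun j => by split_ifs <;> simp)
  exact (hf.of_nonneg_of_le (fun _ => norm_nonneg _) fun j => by split_ifs <;> simp)

lemma summable_of_two_mul_tsum_eq_one {u : ℕ → ℝ} (h : 2 * ∑' ν, u ν = 1) : Summable u := by
  by_contra hu
  simp [tsum_eq_zero_of_not_summable hu] at h

lemma summable_rpow_sq_sub_and_tsum_lt_two {c : ℝ} (hc : 0 < c)
    (hroot : 2 * ∑' ν : ℕ, c ^ (((ν : ℝ) + 1) ^ 2 / 2) = 1) (m : ℕ) :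
    Summable (fun j : ℕ => c ^ (((j : ℝ) - m) ^ 2 / 2)) ∧
      ∑' j : ℕ, c ^ (((j : ℝ) - m) ^ 2 / 2) < 2 := by
  -- Split the sum at `m`: the terms `j < m` are those of `u` below `m` in reverse order, the
  -- term `j = m` is `1`, and the terms `j > m` are all of `u`.
  set u : ℕ → ℝ := fun ν => c ^ (((ν : ℝ) + 1) ^ 2 / 2)
  set w : ℕ → ℝ := fun j => c ^ (((j : ℝ) - m) ^ 2 / 2)
  have hu : Summable u := summable_of_two_mul_tsum_eq_one hroot
  have hshift : (fun ν => w (ν + (m + 1))) = u := by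
    funext ν; simp only [w, u]; push_cast; ring_nf
  have hw : Summable w := (summable_nat_add_iff (m + 1)).mp (hshift ▸ hu)
  have hhead : ∑ j ∈ Finset.range m, w j = ∑ i ∈ Finset.range m, u i := by
    rw [← Finset.sum_range_reflect]
    refine Finset.sum_congr rfl fun i hi => ?_
    have him : i + 1 ≤ m := Finset.mem_range.mp hi
    simp only [w, u, Nat.cast_sub (by omega : i ≤ m - 1), Nat.cast_sub (by omega : 1 ≤ m)]
    ring_nf
  have htail : 0 < ∑' ν, u (ν + m) :=
    ((summable_nat_add_iff m).mpr hu).tsum_pos (fun _ => by positivity) 0 (by positivity)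
  refine ⟨hw, ?_⟩
  have h1 := hw.sum_add_tsum_nat_add (m + 1)
  have h2 := hu.sum_add_tsum_nat_add m
  rw [hshift, Finset.sum_range_succ, hhead] at h1
  have hwm : w m = 1 := by simp [w]
  linarith

lemma triangle_succ (j : ℕ) : (j + 1) * (j + 1 + 1) / 2 = j * (j + 1) / 2 + (j + 1) := by
  rw [show (j + 1) * (j + 1 + 1) = j * (j + 1) + (j + 1) * 2 by ring,
    Nat.add_mul_div_right _ _ two_pos]

lemma cast_triangle (j : ℕ) : ((j * (j + 1) / 2 : ℕ) : ℝ) = j * (j + 1) / 2 := by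
  rw [Nat.cast_div_charZero (Nat.even_mul_succ_self j).two_dvd]
  push_cast
  ring

lemma summable_pow_triangle_mul_pow {p X : ℝ} (hp₀ : 0 ≤ p) (hp : p < 1) (hX : 0 ≤ X) :
    Summable fun j : ℕ => p ^ (j * (j + 1) / 2) * X ^ j := by
  refine summable_of_ratio_norm_eventually_le (r := 1 / 2) (by norm_num) ?_
  have hlim : Tendsto (fun j : ℕ => p ^ (j + 1) * X) atTop (𝓝 0) := by
    simpa using ((tendsto_pow_atTop_nhds_zero_of_lt_one hp₀ hp).comp
      (tendsto_add_atTop_nat 1)).mul_const X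
  filter_upwards [hlim.eventually_lt_const (by norm_num : (0 : ℝ) < 1 / 2)] with j hj
  rw [Real.norm_of_nonneg (by positivity), Real.norm_of_nonneg (by positivity), triangle_succ,
    show p ^ (j * (j + 1) / 2 + (j + 1)) * X ^ (j + 1)
      = p ^ (j + 1) * X * (p ^ (j * (j + 1) / 2) * X ^ j) by ring]
  exact mul_le_mul_of_nonneg_right hj.le (by positivity)

lemma theta_zero_right (q : ℂ) : theta q 0 = 1 := by
  rw [theta, tsum_eq_single 0 fun j hj => by simp [hj]]
  simp

lemma differentiable_theta {q : ℂ} (hq : ‖q‖ < 1) : Differentiable ℂ (theta q) := by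
  intro x
  have hX : x ∈ ball (0 : ℂ) (‖x‖ + 1) := by simp
  refine (differentiableOn_tsum_of_summable_norm
    (summable_pow_triangle_mul_pow (norm_nonneg q) hq (by positivity : 0 ≤ ‖x‖ + 1))
    (fun j => (differentiable_const _).mul (differentiable_pow j) |>.differentiableOn)
    isOpen_ball fun j y hy => ?_).differentiableAt (isOpen_ball.mem_nhds hX)
  rw [norm_mul, norm_pow, norm_pow]
  gcongr
  exact (mem_ball_zero_iff.mp hy).le

noncomputable def thetaRadius (q : ℂ) (m : ℕ) : ℝ := ‖q‖ ^ (-((m : ℝ) + 1 / 2))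

lemma thetaRadius_pos {q : ℂ} (hq : 0 < ‖q‖) (m : ℕ) : 0 < thetaRadius q m :=
  Real.rpow_pos_of_pos hq _

lemma pow_triangle_mul_thetaRadius_pow {q : ℂ} (hq : 0 < ‖q‖) (j m : ℕ) :
    ‖q‖ ^ (j * (j + 1) / 2) * thetaRadius q m ^ j
      = ‖q‖ ^ (m * (m + 1) / 2) * thetaRadius q m ^ m * ‖q‖ ^ (((j : ℝ) - m) ^ 2 / 2) := by
  have h : ∀ k : ℕ, ‖q‖ ^ (k * (k + 1) / 2) * thetaRadius q m ^ k
      = ‖q‖ ^ ((k : ℝ) * (k + 1) / 2 - ((m : ℝ) + 1 / 2) * k) := fun k => by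
    rw [thetaRadius, ← Real.rpow_natCast, ← Real.rpow_natCast _ k, ← Real.rpow_mul hq.le,
      ← Real.rpow_add hq, cast_triangle]
    ring_nf
  rw [h, h, ← Real.rpow_add hq]
  ring_nf

theorem norm_theta_sub_term_lt {c : ℝ} (hc : 0 < c)
    (hroot : 2 * ∑' ν : ℕ, c ^ (((ν : ℝ) + 1) ^ 2 / 2) = 1) {q : ℂ} (hq : 0 < ‖q‖)
    (hqc : ‖q‖ ≤ c) (m : ℕ) {x : ℂ} (hx : ‖x‖ = thetaRadius q m) :
    ‖theta q x - q ^ (m * (m + 1) / 2) * x ^ m‖ < ‖q ^ (m * (m + 1) / 2) * x ^ m‖ := by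
  set M := ‖q‖ ^ (m * (m + 1) / 2) * thetaRadius q m ^ m
  have hM : 0 < M := by have := thetaRadius_pos hq m; positivity
  have hterm : ∀ j : ℕ, ‖q ^ (j * (j + 1) / 2) * x ^ j‖ = M * ‖q‖ ^ (((j : ℝ) - m) ^ 2 / 2) :=
    fun j => by rw [norm_mul, norm_pow, norm_pow, hx, pow_triangle_mul_thetaRadius_pow hq]
  obtain ⟨hsc, hlt⟩ := summable_rpow_sq_sub_and_tsum_lt_two hc hroot m
  have hle : ∀ j : ℕ, ‖q‖ ^ (((j : ℝ) - m) ^ 2 / 2) ≤ c ^ (((j : ℝ) - m) ^ 2 / 2) :=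
    fun j => Real.rpow_le_rpow hq.le hqc (by positivity)
  have hsq : Summable fun j : ℕ => ‖q‖ ^ (((j : ℝ) - m) ^ 2 / 2) :=
    hsc.of_nonneg_of_le (fun _ => by positivity) hle
  have hsum : Summable fun j : ℕ => ‖q ^ (j * (j + 1) / 2) * x ^ j‖ := by
    simpa only [hterm] using hsq.mul_left M
  calc ‖theta q x - q ^ (m * (m + 1) / 2) * x ^ m‖
      ≤ ∑' j : ℕ, ‖q ^ (j * (j + 1) / 2) * x ^ j‖ - ‖q ^ (m * (m + 1) / 2) * x ^ m‖ :=
        norm_tsum_sub_le hsum m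
    _ = M * ∑' j : ℕ, ‖q‖ ^ (((j : ℝ) - m) ^ 2 / 2) - M := by
        simp only [hterm, tsum_mul_left, sub_self]; simp
    _ ≤ M * ∑' j : ℕ, c ^ (((j : ℝ) - m) ^ 2 / 2) - M := by
        gcongr
    _ < M * 2 - M := by gcongr
    _ = ‖q ^ (m * (m + 1) / 2) * x ^ m‖ := by rw [hterm]; simp; ring

lemma theta_ne_zero_of_norm_eq_thetaRadius {c : ℝ} (hc : 0 < c)
    (hroot : 2 * ∑' ν : ℕ, c ^ (((ν : ℝ) + 1) ^ 2 / 2) = 1) {q : ℂ} (hq : 0 < ‖q‖)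
    (hqc : ‖q‖ ≤ c) (m : ℕ) {x : ℂ} (hx : ‖x‖ = thetaRadius q m) : theta q x ≠ 0 := fun h => by
  simpa [h] using norm_theta_sub_term_lt hc hroot hq hqc m hx

theorem finsum_divisor_theta_closedBall_thetaRadius {c : ℝ} (hc : 0 < c)
    (hroot : 2 * ∑' ν : ℕ, c ^ (((ν : ℝ) + 1) ^ 2 / 2) = 1) {q : ℂ} (hq : 0 < ‖q‖)
    (hqc : ‖q‖ ≤ c) (hq1 : ‖q‖ < 1) (m : ℕ) :
    ∑ᶠ u, divisor (theta q) (closedBall 0 (thetaRadius q m)) u = m := by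
  have hR := thetaRadius_pos hq m
  have hθ := differentiable_theta hq1
  have hmono : Differentiable ℂ fun z : ℂ => q ^ (m * (m + 1) / 2) * z ^ m := by fun_prop
  have hcount := circleIntegral_logDeriv_eq_finsum_divisor (c := 0) hR (fun z _ => hθ.analyticAt z)
    fun z hz => theta_ne_zero_of_norm_eq_thetaRadius hc hroot hq hqc m (by simpa using hz)
  rw [circleIntegral_logDeriv_eq_of_norm_sub_lt hR.le (fun z _ => hθ.analyticAt z)
    (fun z _ => hmono.analyticAt z) fun z hz => norm_theta_sub_term_lt hc hroot hq hqc m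
    (by simpa using hz), circleIntegral_logDeriv_const_mul_pow
    (pow_ne_zero _ (norm_pos_iff.mp hq)) m hR] at hcount
  exact_mod_cast (mul_left_cancel₀ two_pi_I_ne_zero hcount).symm

lemma exists_norm_lt_thetaRadius {q : ℂ} (hq : 0 < ‖q‖) (hq1 : ‖q‖ < 1) (x : ℂ) :
    ∃ m, ‖x‖ < thetaRadius q m := by
  obtain ⟨m, hm⟩ := pow_unbounded_of_one_lt ‖x‖ (one_lt_inv₀ hq |>.mpr hq1)
  refine ⟨m, hm.trans_le ?_⟩
  rw [thetaRadius, Real.rpow_neg hq.le, ← Real.inv_rpow hq.le, ← Real.rpow_natCast]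
  exact Real.rpow_le_rpow_of_exponent_le (one_le_inv₀ hq |>.mpr hq1.le) (by linarith)

lemma analyticOrderAt_theta_ne_top {q : ℂ} (hq : ‖q‖ < 1) (x : ℂ) :
    analyticOrderAt (theta q) x ≠ ⊤ := by
  have h0 : analyticOrderAt (theta q) 0 = 0 :=
    ((differentiable_theta hq).analyticAt 0).analyticOrderAt_eq_zero.mpr (by
      simp [theta_zero_right])
  exact AnalyticOnNhd.analyticOrderAt_ne_top_of_isPreconnected
    (analyticOnNhd_univ_iff_differentiable.mpr (differentiable_theta hq)) isPreconnected_univ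
    (mem_univ 0) (mem_univ x) (h0 ▸ ENat.zero_ne_top)

/-- For 0 < |q| ≤ c₀, where 2·∑_{ν=1}^∞ c₀^{ν²/2} = 1 with c₀ ∈ (0,1),
θ(q,·) has no multiple zeros. -/
theorem theta_no_multiple_zeros (c₀ : ℝ) (hc₀ : c₀ ∈ Set.Ioo (0 : ℝ) 1)
    (hroot : 2 * ∑' ν : ℕ, c₀ ^ (((ν : ℝ) + 1) ^ 2 / 2) = 1)
    (q : ℂ) (hq : 0 < ‖q‖) (hqc : ‖q‖ ≤ c₀) :
    ¬ ∃ x : ℂ, theta q x = 0 ∧ deriv (theta q) x = 0 := by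
  rintro ⟨x, hθ, hθ'⟩
  have hq1 : ‖q‖ < 1 := hqc.trans_lt hc₀.2
  have hθa : AnalyticOnNhd ℂ (theta q) univ :=
    analyticOnNhd_univ_iff_differentiable.mpr (differentiable_theta hq1)
  have hN := finsum_divisor_theta_closedBall_thetaRadius hc₀.1 hroot hq hqc hq1
  have hmult : ∀ m, ‖x‖ ≤ thetaRadius q m →
      2 ≤ divisor (theta q) (closedBall 0 (thetaRadius q m)) x := fun m hm =>
    two_le_divisor_of_deriv_eq_zero (hθa.mono (subset_univ _)) (by simpa using hm)
      (analyticOrderAt_theta_ne_top hq1 x) hθ hθ'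
  have hex := exists_norm_lt_thetaRadius hq hq1 x
  have hk := Nat.find_spec hex
  match hfind : Nat.find hex with
  | 0 =>
    rw [hfind] at hk
    have := divisor_le_finsum_divisor (hθa.mono (subset_univ (closedBall 0 (thetaRadius q 0)))) x
    rw [hN, Nat.cast_zero] at this
    linarith [hmult 0 hk.le]
  | k + 1 =>
    rw [hfind] at hk
    have hxk : thetaRadius q k < ‖x‖ := lt_of_le_of_ne (not_lt.mp (Nat.find_min hex (by omega)))
      fun h => theta_ne_zero_of_norm_eq_thetaRadius hc₀.1 hroot hq hqc k h.symm hθ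
    have := finsum_divisor_add_le (c := 0) (r := thetaRadius q k) (hθa.mono (subset_univ _))
      (by simpa using hxk) (by simpa using hk.le)
    rw [hN, hN] at this
    push_cast at this
    linarith [hmult (k + 1) hk.le]
end

section
/- Let q ∈ ℂ with 0 < |q| ≤ 1/3 and let k ≥ 2 be an integer. If x ∈ ℂ satisfies |x| = |q|^{-k-1/2}, then θ(q,x) = ∑_{j=0}^∞ q^{j(j+1)/2} x^j ≠ 0. -/
open Complex

/-!
Put `s = |q|^{1/2}` and `t_j = q^{j(j+1)/2} x^j`. On the circle `|x| = |q|^{-k-1/2}` one has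
`|t_j| = |t_k| s^{(j-k)^2}`, so the five terms with `|j - k| ≤ 2` dominate: all the others
together have modulus at most `2 s^9 / (1 - s^7) |t_k| < |t_k| / 40`. With `a = q^{k+1} x` and
`b = (q^k x)⁻¹` one has `|a| = |b| = s`, `ab = q`, and the five terms add up to
`t_k (1 + a + b + ab(a^2 + b^2))`. Because `|a| = |b|`, writing `a + b = τ w` with `τ ≥ 0`,
`|w| = 1` forces `ab = s^2 w^2`, so the bracket is `1 + τ w + (s^2 τ^2 - 2 s^4) w^4`; an
elementary case analysis on the position of `w` on the unit circle shows that this has modulus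
at least `1/40` when `s^2 ≤ 1/3`.
-/

lemma one_div_sixteen_le_one_sub_add {s τ : ℝ} (hs : s ^ 2 ≤ 1 / 3) (hτs : τ ≤ 2 * s) :
    1 / 16 ≤ 1 - τ + (s ^ 2 * τ ^ 2 - 2 * s ^ 4) := by
  have h58 : s ≤ 29 / 50 := by nlinarith
  -- `1 - τ + s²τ² - 2s⁴` decreases in `τ ≤ 2s`, and `1 - 2s + 2s⁴` decreases in `s ≤ 29/50`.
  have hend : 1 / 16 ≤ 1 - 2 * s + 2 * s ^ 4 := by
    nlinarith [mul_nonneg (by linarith : (0:ℝ) ≤ 29 / 50 - s)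
      (by nlinarith : (0:ℝ) ≤ 1 - s ^ 3 - s ^ 2 * (29 / 50) - s * (29 / 50) ^ 2 - (29 / 50) ^ 3)]
  nlinarith [mul_nonneg (by linarith : (0:ℝ) ≤ 2 * s - τ)
    (by nlinarith : (0:ℝ) ≤ 1 - s ^ 2 * (τ + 2 * s))]

lemma one_div_four_le_sub_four_mul {s τ : ℝ} (hs : s ^ 2 ≤ 1 / 3) (hτ : 7 / 10 < τ)
    (hτs : τ ≤ 2 * s) : 1 / 4 ≤ τ - 4 * (s ^ 2 * τ ^ 2 - 2 * s ^ 4) := by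
  nlinarith [mul_nonneg (mul_nonneg (sq_nonneg s) (by linarith : (0:ℝ) ≤ τ - 7 / 10))
    (by linarith : (0:ℝ) ≤ 2 * s - τ), sq_nonneg (s ^ 2 - 1 / 3), sq_nonneg (s - 1 / 2)]

lemma two_mul_pow_nine_div_one_sub_pow_seven_lt {s : ℝ} (hs0 : 0 ≤ s) (hs : s ^ 2 ≤ 1 / 3) :
    2 * s ^ 9 / (1 - s ^ 7) < 1 / 40 := by
  have h35 : s ≤ 3 / 5 := by nlinarith
  have h7 : s ^ 7 ≤ (3 / 5) ^ 7 := pow_le_pow_left₀ hs0 h35 7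
  have h9 : s ^ 9 ≤ (3 / 5) ^ 9 := pow_le_pow_left₀ hs0 h35 9
  rw [div_lt_iff₀ (by norm_num at h7 ⊢; linarith)]
  norm_num at h7 h9 ⊢
  linarith

lemma one_div_four_le_add_four_mul_mul {τ c y z : ℝ} (hyz : y ^ 2 + z ^ 2 = 1) (hy0 : y < 0)
    (hτ : 7 / 10 < τ) (hc : |c| ≤ 2 / 9) (hB : 1 / 4 ≤ τ - 4 * c) :
    1 / 4 ≤ τ + 4 * c * (y * (y ^ 2 - z ^ 2)) := by
  have hP : y * (y ^ 2 - z ^ 2) = y * (2 * y ^ 2 - 1) := by linear_combination (-y) * hyz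
  obtain ⟨hc₁, hc₂⟩ := abs_le.1 hc
  rw [hP]
  rcases le_or_gt (-3 / 4) y with hy | hy
  · have hP₁ : -1 / 2 ≤ y * (2 * y ^ 2 - 1) := by nlinarith
    have hP₂ : y * (2 * y ^ 2 - 1) ≤ 1 / 2 := by
      nlinarith [mul_nonneg (neg_nonneg.2 hy0.le) (sq_nonneg (y + 1 / 2))]
    nlinarith
  · have hP₁ : -1 ≤ y * (2 * y ^ 2 - 1) := by nlinarith
    have hP₂ : y * (2 * y ^ 2 - 1) ≤ 0 := by nlinarith
    rcases le_or_gt 0 c with hc0 | hc0 <;> nlinarith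

lemma one_div_forty_le_re_or_im {τ c y z : ℝ} (hyz : y ^ 2 + z ^ 2 = 1) (hτ : 0 ≤ τ)
    (hc : |c| ≤ 2 / 9) (hA : 1 / 16 ≤ 1 - τ + c) (hB : 7 / 10 < τ → 1 / 4 ≤ τ - 4 * c) :
    1 / 40 ≤ 1 + τ * y + c * (y ^ 4 - 6 * y ^ 2 * z ^ 2 + z ^ 4) ∨
      1 / 40 ≤ |z| * (τ + 4 * c * (y * (y ^ 2 - z ^ 2))) := by
  obtain ⟨hc₁, hc₂⟩ := abs_le.1 hc
  have hy1 : -1 ≤ y := by nlinarith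
  have hX : y ^ 4 - 6 * y ^ 2 * z ^ 2 + z ^ 4 = 1 - 8 * (y ^ 2 * z ^ 2) := by
    linear_combination (y ^ 2 + z ^ 2 + 1) * hyz
  have hyz₀ : 0 ≤ y ^ 2 * z ^ 2 := by positivity
  have hyz₁ : y ^ 2 * z ^ 2 ≤ 1 / 4 := by nlinarith [sq_nonneg (y ^ 2 - z ^ 2)]
  rw [hX]
  -- The real part can only be small for `w = y + iz` on the left arc; away from `-1` the
  -- imaginary part `z (τ + 4c y(y² - z²))` is then large, and near `-1` we use `hA`.
  by_cases hleft : 0 ≤ y ∨ τ ≤ 7 / 10 ∨ y ≤ -99 / 100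
  · left
    rcases hleft with hy | hτ7 | hy99
    · nlinarith [mul_nonneg hτ hy]
    · nlinarith [mul_le_mul_of_nonneg_left hy1 hτ]
    · have hz : y ^ 2 * z ^ 2 ≤ 1 / 50 := by nlinarith
      nlinarith [mul_nonneg hτ (by linarith : (0:ℝ) ≤ 1 + y)]
  · right
    push Not at hleft
    obtain ⟨hy0, hτ7, hy99⟩ := hleft
    have hz : 1 / 10 ≤ |z| := by
      rw [← abs_of_pos (by norm_num : (0:ℝ) < 1 / 10), ← sq_le_sq]
      nlinarith
    nlinarith [one_div_four_le_add_four_mul_mul hyz hy0 hτ7 hc (hB hτ7)]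

lemma one_div_forty_le_norm_one_add_mul_add_mul_pow_four {τ c : ℝ} {w : ℂ} (hw : ‖w‖ = 1)
    (hτ : 0 ≤ τ) (hc : |c| ≤ 2 / 9) (hA : 1 / 16 ≤ 1 - τ + c)
    (hB : 7 / 10 < τ → 1 / 4 ≤ τ - 4 * c) : 1 / 40 ≤ ‖1 + τ * w + c * w ^ 4‖ := by
  have hyz : w.re ^ 2 + w.im ^ 2 = 1 := by
    have h := Complex.sq_norm w
    rw [hw, normSq_apply] at h
    linarith
  have hw4 : w ^ 4 = w * w * (w * w) := by ring
  have hre : (1 + τ * w + c * w ^ 4).re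
      = 1 + τ * w.re + c * (w.re ^ 4 - 6 * w.re ^ 2 * w.im ^ 2 + w.im ^ 4) := by
    simp only [hw4, add_re, mul_re, mul_im, one_re, ofReal_re, ofReal_im]; ring
  have him : (1 + τ * w + c * w ^ 4).im
      = w.im * (τ + 4 * c * (w.re * (w.re ^ 2 - w.im ^ 2))) := by
    simp only [hw4, add_im, mul_re, mul_im, one_im, ofReal_re, ofReal_im]; ring
  rcases one_div_forty_le_re_or_im hyz hτ hc hA hB with h | h
  · exact (hre ▸ h).trans (re_le_norm _)
  · refine (h.trans ?_).trans (abs_im_le_norm _)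
    rw [him, abs_mul]
    exact mul_le_mul_of_nonneg_left (le_abs_self _) (abs_nonneg _)

lemma mul_eq_sq_mul_sq_of_norm_eq {a b w : ℂ} {s τ : ℝ} (ha : ‖a‖ = s) (hb : ‖b‖ = s)
    (hw : ‖w‖ = 1) (hτ : τ ≠ 0) (hsum : a + b = τ * w) : a * b = s ^ 2 * w ^ 2 := by
  have hca := mul_conj' a
  have hcb := mul_conj' b
  have hcw := mul_conj' w
  rw [ha] at hca
  rw [hb] at hcb
  rw [hw, ofReal_one, one_pow] at hcw
  have h₁ : a * b * starRingEnd ℂ (a + b) = s ^ 2 * (a + b) := by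
    rw [map_add]
    linear_combination b * hca + a * hcb
  rw [hsum, map_mul, conj_ofReal] at h₁
  have h₂ : a * b * starRingEnd ℂ w = s ^ 2 * w :=
    mul_left_cancel₀ (ofReal_ne_zero.2 hτ) (by linear_combination h₁)
  linear_combination w * h₂ - a * b * hcw

def fiveTermFactor (a b : ℂ) : ℂ := 1 + a + b + a * b * (a ^ 2 + b ^ 2)

lemma one_div_forty_le_norm_fiveTermFactor {a b : ℂ} {s : ℝ} (hs : s ^ 2 ≤ 1 / 3)
    (ha : ‖a‖ = s) (hb : ‖b‖ = s) : 1 / 40 ≤ ‖fiveTermFactor a b‖ := by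
  rw [fiveTermFactor]
  have hs0 : 0 ≤ s := ha ▸ norm_nonneg a
  have hs4 : s ^ 4 ≤ 1 / 9 := by nlinarith
  rcases eq_or_ne (a + b) 0 with hab | hab
  · have hG : 1 + a + b + a * b * (a ^ 2 + b ^ 2) = 1 - 2 * a ^ 4 := by
      rw [eq_neg_of_add_eq_zero_right hab]; ring
    have h := norm_sub_norm_le (1 : ℂ) (2 * a ^ 4)
    rw [norm_one, norm_mul, norm_pow, ha, RCLike.norm_ofNat] at h
    rw [hG]
    linarith
  obtain ⟨τ, w, hτ, hw, hsum⟩ : ∃ τ : ℝ, ∃ w : ℂ, 0 < τ ∧ ‖w‖ = 1 ∧ a + b = τ * w := by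
    have hτ : 0 < ‖a + b‖ := norm_pos_iff.2 hab
    refine ⟨‖a + b‖, (a + b) / ‖a + b‖, hτ, ?_, ?_⟩
    · rw [norm_div, norm_real, Real.norm_of_nonneg hτ.le, div_self hτ.ne']
    · rw [mul_div_cancel₀ _ (ofReal_ne_zero.2 hτ.ne')]
  have hτs : τ ≤ 2 * s := by
    have h := norm_add_le a b
    rw [hsum, norm_mul, hw, norm_real, Real.norm_of_nonneg hτ.le, ha, hb] at h
    linarith
  have hG : 1 + a + b + a * b * (a ^ 2 + b ^ 2)
      = 1 + τ * w + ((s ^ 2 * τ ^ 2 - 2 * s ^ 4 : ℝ) : ℂ) * w ^ 4 := by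
    rw [show 1 + a + b + a * b * (a ^ 2 + b ^ 2)
        = 1 + (a + b) + a * b * ((a + b) ^ 2 - 2 * (a * b)) by ring,
      mul_eq_sq_mul_sq_of_norm_eq ha hb hw hτ.ne' hsum, hsum]
    push_cast
    ring
  have hc : |s ^ 2 * τ ^ 2 - 2 * s ^ 4| ≤ 2 / 9 :=
    abs_le.2 ⟨by nlinarith [sq_nonneg (s * τ)], by nlinarith [sq_nonneg (s * τ)]⟩
  rw [hG]
  exact one_div_forty_le_norm_one_add_mul_add_mul_pow_four hw hτ.le hc
    (one_div_sixteen_le_one_sub_add hs hτs) (fun hτ7 => one_div_four_le_sub_four_mul hs hτ7 hτs)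

def thetaTerm (q x : ℂ) (j : ℕ) : ℂ := q ^ (j * (j + 1) / 2) * x ^ j

lemma thetaTerm_succ (q x : ℂ) (j : ℕ) :
    thetaTerm q x (j + 1) = thetaTerm q x j * (q ^ (j + 1) * x) := by
  have h : (j + 1) * (j + 1 + 1) / 2 = j * (j + 1) / 2 + (j + 1) := by
    rw [show (j + 1) * (j + 1 + 1) = j * (j + 1) + (j + 1) * 2 by ring,
      Nat.add_mul_div_right _ _ two_pos]
  rw [thetaTerm, thetaTerm, h]
  ring

lemma sum_five_thetaTerm {q x : ℂ} (hq : q ≠ 0) (hx : x ≠ 0) (n : ℕ) :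
    thetaTerm q x n + thetaTerm q x (n + 1) + thetaTerm q x (n + 2) + thetaTerm q x (n + 3)
        + thetaTerm q x (n + 4) =
      thetaTerm q x (n + 2) * fiveTermFactor (q ^ (n + 3) * x) (q ^ (n + 2) * x)⁻¹ := by
  rw [fiveTermFactor, thetaTerm_succ q x (n + 3), thetaTerm_succ q x (n + 2),
    thetaTerm_succ q x (n + 1), thetaTerm_succ q x n]
  field_simp
  ring

section TermNorms

variable {q x : ℂ} {s : ℝ} {k : ℕ}

lemma norm_thetaTerm_mul_pow (hq : ‖q‖ = s ^ 2) (hx : ‖x‖ * s ^ (2 * k + 1) = 1) {j m : ℕ}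
    (hjm : ((j : ℤ) - k) ^ 2 = m ^ 2) : ‖thetaTerm q x j‖ * s ^ (k ^ 2) = s ^ (m ^ 2) := by
  have hexp : j * (j + 1) + k ^ 2 = m ^ 2 + (2 * k + 1) * j := by
    zify
    linear_combination hjm
  have hnorm : ‖thetaTerm q x j‖ = s ^ (j * (j + 1)) * ‖x‖ ^ j := by
    rw [thetaTerm, norm_mul, norm_pow, norm_pow, hq, ← pow_mul,
      Nat.two_mul_div_two_of_even (Nat.even_mul_succ_self j)]
  calc ‖thetaTerm q x j‖ * s ^ (k ^ 2) = ‖x‖ ^ j * s ^ (j * (j + 1) + k ^ 2) := by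
        rw [hnorm]; ring
    _ = s ^ (m ^ 2) * (‖x‖ * s ^ (2 * k + 1)) ^ j := by rw [hexp]; ring
    _ = s ^ (m ^ 2) := by rw [hx, one_pow, mul_one]

lemma pow_sq_add_three_le (hs0 : 0 ≤ s) (hs1 : s ≤ 1) (i : ℕ) :
    s ^ ((i + 3) ^ 2) ≤ s ^ 9 * (s ^ 7) ^ i := by
  rw [← pow_mul, ← pow_add]
  exact pow_le_pow_of_le_one hs0 hs1 (by nlinarith [Nat.le_self_pow two_ne_zero i])

lemma norm_thetaTerm_le (hs0 : 0 < s) (hs1 : s ≤ 1) (hq : ‖q‖ = s ^ 2)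
    (hx : ‖x‖ * s ^ (2 * k + 1) = 1) {j i : ℕ} (hji : ((j : ℤ) - k) ^ 2 = (i + 3) ^ 2) :
    ‖thetaTerm q x j‖ ≤ s ^ 9 * (s ^ 7) ^ i / s ^ (k ^ 2) := by
  rw [le_div_iff₀ (by positivity),
    norm_thetaTerm_mul_pow hq hx (m := i + 3) (by push_cast; exact hji)]
  exact pow_sq_add_three_le hs0.le hs1 i

lemma hasSum_geometric_majorant (hs0 : 0 ≤ s) (hs1 : s < 1) (k : ℕ) :
    HasSum (fun i : ℕ => s ^ 9 * (s ^ 7) ^ i / s ^ (k ^ 2))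
      (s ^ 9 / (1 - s ^ 7) / s ^ (k ^ 2)) :=
  ((hasSum_geometric_of_lt_one (pow_nonneg hs0 7)
    (pow_lt_one₀ hs0 hs1 (by norm_num))).mul_left (s ^ 9)).div_const _

lemma summable_thetaTerm_add (hs0 : 0 < s) (hs1 : s < 1) (hq : ‖q‖ = s ^ 2)
    (hx : ‖x‖ * s ^ (2 * k + 1) = 1) : Summable fun i => thetaTerm q x (i + (k + 3)) :=
  (hasSum_geometric_majorant hs0.le hs1 k).summable.of_norm_bounded
    fun i => norm_thetaTerm_le hs0 hs1.le hq hx (by push_cast; ring)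

lemma norm_tsum_thetaTerm_add_le (hs0 : 0 < s) (hs1 : s < 1) (hq : ‖q‖ = s ^ 2)
    (hx : ‖x‖ * s ^ (2 * k + 1) = 1) :
    ‖∑' i, thetaTerm q x (i + (k + 3))‖ ≤ s ^ 9 / (1 - s ^ 7) / s ^ (k ^ 2) :=
  tsum_of_norm_bounded (hasSum_geometric_majorant hs0.le hs1 k)
    fun i => norm_thetaTerm_le hs0 hs1.le hq hx (by push_cast; ring)

lemma norm_sum_range_thetaTerm_le {n : ℕ} (hs0 : 0 < s) (hs1 : s < 1) (hq : ‖q‖ = s ^ 2)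
    (hx : ‖x‖ * s ^ (2 * (n + 2) + 1) = 1) :
    ‖∑ i ∈ Finset.range n, thetaTerm q x i‖ ≤ s ^ 9 / (1 - s ^ 7) / s ^ ((n + 2) ^ 2) := by
  rw [← Finset.sum_range_reflect]
  refine (norm_sum_le _ _).trans ((Finset.sum_le_sum fun i hi => ?_).trans
    (sum_le_hasSum _ (fun _ _ => by positivity) (hasSum_geometric_majorant hs0.le hs1 (n + 2))))
  have hi : i < n := Finset.mem_range.1 hi
  refine norm_thetaTerm_le hs0 hs1.le hq hx ?_
  rw [Nat.cast_sub (by omega), Nat.cast_sub (by omega)]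
  push_cast
  ring

lemma norm_pow_succ_mul (hq : ‖q‖ = s ^ 2) (hx : ‖x‖ * s ^ (2 * k + 1) = 1) :
    ‖q ^ (k + 1) * x‖ = s := by
  rw [norm_mul, norm_pow, hq, ← pow_mul]
  linear_combination s * hx

lemma norm_inv_pow_mul (hq : ‖q‖ = s ^ 2) (hx : ‖x‖ * s ^ (2 * k + 1) = 1) :
    ‖(q ^ k * x)⁻¹‖ = s := by
  rw [norm_inv, norm_mul, norm_pow, hq, ← pow_mul]
  exact inv_eq_of_mul_eq_one_left (by linear_combination hx)

end TermNorms

lemma theta_eq_tsum_thetaTerm (q x : ℂ) : theta q x = ∑' j, thetaTerm q x j := rfl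

lemma norm_fiveTermFactor_le_of_theta_eq_zero {q x : ℂ} {s : ℝ} {n : ℕ} (hs0 : 0 < s)
    (hs1 : s < 1) (hq : ‖q‖ = s ^ 2) (hx : ‖x‖ * s ^ (2 * (n + 2) + 1) = 1) (h : theta q x = 0) :
    ‖fiveTermFactor (q ^ (n + 3) * x) (q ^ (n + 2) * x)⁻¹‖ ≤ 2 * s ^ 9 / (1 - s ^ 7) := by
  have hq0 : q ≠ 0 := norm_ne_zero_iff.1 (by rw [hq]; positivity)
  have hx0 : x ≠ 0 := by rintro rfl; simp at hx
  have hsplit : theta q x = ∑ i ∈ Finset.range n, thetaTerm q x i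
      + (thetaTerm q x n + thetaTerm q x (n + 1) + thetaTerm q x (n + 2) + thetaTerm q x (n + 3)
        + thetaTerm q x (n + 4)) + ∑' i, thetaTerm q x (i + (n + 2 + 3)) := by
    rw [theta_eq_tsum_thetaTerm, ← ((summable_nat_add_iff (n + 2 + 3)).1
      (summable_thetaTerm_add hs0 hs1 hq hx)).sum_add_tsum_nat_add (n + 2 + 3)]
    simp only [Finset.sum_range_succ]
    ring
  rw [sum_five_thetaTerm hq0 hx0, h] at hsplit
  have hcenter : ‖thetaTerm q x (n + 2)‖ * s ^ ((n + 2) ^ 2) = 1 := by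
    simpa using norm_thetaTerm_mul_pow hq hx (j := n + 2) (m := 0) (by ring)
  have hbound : ‖thetaTerm q x (n + 2)‖ * ‖fiveTermFactor (q ^ (n + 3) * x) (q ^ (n + 2) * x)⁻¹‖
      ≤ 2 * (s ^ 9 / (1 - s ^ 7) / s ^ ((n + 2) ^ 2)) := by
    rw [← norm_mul, show thetaTerm q x (n + 2) * _ = -(∑ i ∈ Finset.range n, thetaTerm q x i
      + ∑' i, thetaTerm q x (i + (n + 2 + 3))) by linear_combination -hsplit, norm_neg, two_mul]
    exact (norm_add_le _ _).trans (add_le_add (norm_sum_range_thetaTerm_le hs0 hs1 hq hx)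
      (norm_tsum_thetaTerm_add_le hs0 hs1 hq hx))
  calc ‖fiveTermFactor (q ^ (n + 3) * x) (q ^ (n + 2) * x)⁻¹‖
      = ‖thetaTerm q x (n + 2)‖ * ‖fiveTermFactor (q ^ (n + 3) * x) (q ^ (n + 2) * x)⁻¹‖
        * s ^ ((n + 2) ^ 2) := by rw [mul_right_comm, hcenter, one_mul]
    _ ≤ 2 * (s ^ 9 / (1 - s ^ 7) / s ^ ((n + 2) ^ 2)) * s ^ ((n + 2) ^ 2) := by gcongr
    _ = 2 * s ^ 9 / (1 - s ^ 7) := by field_simp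

/-- For 0 < |q| ≤ 1/3, k ≥ 2 and |x| = |q|^{-k-1/2}, one has θ(q,x) ≠ 0. -/
theorem theta_ne_zero_on_circles (q x : ℂ) (k : ℕ) (hk : 2 ≤ k)
    (hq : 0 < ‖q‖) (hq3 : ‖q‖ ≤ 1 / 3)
    (hx : ‖x‖ = ‖q‖ ^ (-(k : ℝ) - 1 / 2)) :
    theta q x ≠ 0 := by
  obtain ⟨n, rfl⟩ : ∃ n, k = n + 2 := ⟨k - 2, by omega⟩
  set s := √‖q‖ with hs_def
  have hs0 : 0 < s := Real.sqrt_pos.2 hq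
  have hqs : ‖q‖ = s ^ 2 := (Real.sq_sqrt hq.le).symm
  have hs : s ^ 2 ≤ 1 / 3 := hqs ▸ hq3
  have hxs : ‖x‖ * s ^ (2 * (n + 2) + 1) = 1 := by
    rw [hx, hs_def, Real.sqrt_eq_rpow, ← Real.rpow_natCast, ← Real.rpow_mul hq.le,
      ← Real.rpow_add hq]
    push_cast
    ring_nf
    exact Real.rpow_zero _
  intro h
  have hupper := norm_fiveTermFactor_le_of_theta_eq_zero hs0 (by nlinarith) hqs hxs h
  have hlower := one_div_forty_le_norm_fiveTermFactor hs (norm_pow_succ_mul hqs hxs)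
    (norm_inv_pow_mul hqs hxs)
  linarith [two_mul_pow_nine_div_one_sub_pow_seven_lt hs0.le hs]
end

section
/- Let q ∈ ℂ with 0 < |q| ≤ 0.31 and x ∈ ℂ with |x| ≤ 8.842. Then ∂²θ/∂x²(q,x) ≠ 0, where θ(q,x) = ∑_{j=0}^∞ q^{j(j+1)/2} x^j. -/
/-!
For `‖q‖ < 1` the coefficients `q ^ (j * (j + 1) / 2)` decay faster than any geometric sequence,
so `θ(q, ·)` is entire and may be differentiated termwise:
`∂²θ/∂x²(q, x) = ∑ₙ (n + 1) (n + 2) q ^ T(n + 2) xⁿ` with `T(n) = n (n + 1) / 2`.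
The constant term is `2 q³`. For `‖q‖ ≤ 0.31` and `‖x‖ ≤ 8.842` every later term is bounded by
`‖q‖³` times a majorant whose successive ratios are below `1/6`, so the tail has norm less than
`2 ‖q‖³` and cannot cancel the constant term.
-/

open Complex

theorem Nat.triangle_add (m k : ℕ) :
    (m + k) * (m + k + 1) / 2 = m * (m + 1) / 2 + k * (k + 1) / 2 + m * k := by
  have hm : 2 ∣ m * (m + 1) := (Nat.even_mul_succ_self m).two_dvd
  have hk : 2 ∣ k * (k + 1) := (Nat.even_mul_succ_self k).two_dvd
  have h : (m + k) * (m + k + 1) = m * (m + 1) + k * (k + 1) + 2 * (m * k) := by ring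
  omega

section PowerSeries

variable {𝕜 : Type*} [RCLike 𝕜] {a : ℕ → 𝕜}

def derivCoeff (a : ℕ → 𝕜) (n : ℕ) : 𝕜 := (n + 1) * a (n + 1)

theorem derivCoeff_derivCoeff (a : ℕ → 𝕜) (n : ℕ) :
    derivCoeff (derivCoeff a) n = (n + 1) * (n + 2) * a (n + 2) := by
  simp only [derivCoeff]
  push_cast
  ring

theorem norm_derivCoeff (a : ℕ → 𝕜) (n : ℕ) : ‖derivCoeff a n‖ = (n + 1) * ‖a (n + 1)‖ := by
  rw [derivCoeff, norm_mul, ← Nat.cast_succ, RCLike.norm_natCast, Nat.cast_succ]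

theorem summable_norm_derivCoeff_mul_pow (ha : ∀ r : ℝ, Summable fun n ↦ ‖a n‖ * r ^ n)
    (r : ℝ) : Summable fun n ↦ ‖derivCoeff a n‖ * r ^ n := by
  refine .of_norm_bounded ((summable_nat_add_iff 1).mpr (ha (2 * |r| + 2))) fun n ↦ ?_
  have hn : (n + 1 : ℝ) ≤ 2 ^ (n + 1) := by exact_mod_cast Nat.lt_two_pow_self.le
  have hr : |r| ^ n ≤ (|r| + 1) ^ (n + 1) :=
    (pow_le_pow_left₀ (abs_nonneg r) (by linarith) n).trans
      (pow_le_pow_right₀ (by linarith [abs_nonneg r]) n.le_succ)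
  calc ‖‖derivCoeff a n‖ * r ^ n‖ = ‖a (n + 1)‖ * ((n + 1) * |r| ^ n) := by
        rw [norm_mul, norm_norm, norm_pow, Real.norm_eq_abs, norm_derivCoeff]
        ring
    _ ≤ ‖a (n + 1)‖ * (2 ^ (n + 1) * (|r| + 1) ^ (n + 1)) := by gcongr
    _ = ‖a (n + 1)‖ * (2 * |r| + 2) ^ (n + 1) := by rw [← mul_pow]; ring_nf

theorem hasDerivAt_tsum_mul_pow {R : ℝ} (ha : Summable fun n ↦ ‖derivCoeff a n‖ * R ^ n)
    {z : 𝕜} (hz : ‖z‖ < R) :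
    HasDerivAt (fun w ↦ ∑' n, a n * w ^ n) (∑' n, derivCoeff a n * z ^ n) z := by
  have hR : 0 < R := (norm_nonneg z).trans_lt hz
  have hu : Summable fun n ↦ ‖a n‖ * (n * R ^ (n - 1)) := by
    refine (summable_nat_add_iff 1).mp (ha.congr fun n ↦ ?_)
    rw [norm_derivCoeff, Nat.add_sub_cancel, Nat.cast_succ]
    ring
  have hderiv := hasDerivAt_tsum_of_isPreconnected hu Metric.isOpen_ball
    (convex_ball (0 : 𝕜) R).isPreconnected
    (y₀ := 0) (g := fun n w ↦ a n * w ^ n) (g' := fun n w ↦ a n * (n * w ^ (n - 1)))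
    (fun n w _ ↦ (hasDerivAt_pow n w).const_mul _)
    (fun n w hw ↦ by
      rw [mem_ball_zero_iff] at hw
      rw [norm_mul, norm_mul, norm_pow, RCLike.norm_natCast]
      gcongr)
    (Metric.mem_ball_self hR) (summable_of_ne_finset_zero (s := {0}) fun n hn ↦ by simp_all)
    (mem_ball_zero_iff.mpr hz)
  refine hderiv.congr_deriv ?_
  have hshift : Summable fun n ↦ derivCoeff a n * z ^ n :=
    .of_norm_bounded ha fun n ↦ by rw [norm_mul, norm_pow]; gcongr
  rw [tsum_eq_zero_add' (hshift.congr fun n ↦ by simp only [derivCoeff]; push_cast; ring)]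
  simp only [CharP.cast_eq_zero, zero_mul, mul_zero, zero_add, Nat.cast_add, Nat.cast_one,
    Nat.add_sub_cancel, derivCoeff]
  exact tsum_congr fun n ↦ by ring

theorem deriv_tsum_mul_pow (ha : ∀ r : ℝ, Summable fun n ↦ ‖a n‖ * r ^ n) :
    deriv (fun w ↦ ∑' n, a n * w ^ n) = fun w ↦ ∑' n, derivCoeff a n * w ^ n :=
  funext fun z ↦ (hasDerivAt_tsum_mul_pow (summable_norm_derivCoeff_mul_pow ha _)
    (lt_add_one ‖z‖)).deriv

theorem iteratedDeriv_tsum_mul_pow (ha : ∀ r : ℝ, Summable fun n ↦ ‖a n‖ * r ^ n) (m : ℕ) :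
    iteratedDeriv m (fun w ↦ ∑' n, a n * w ^ n) = fun w ↦ ∑' n, derivCoeff^[m] a n * w ^ n := by
  induction m generalizing a with
  | zero => simp
  | succ m ih =>
    rw [iteratedDeriv_succ', deriv_tsum_mul_pow ha,
      ih (summable_norm_derivCoeff_mul_pow ha), Function.iterate_succ_apply]

end PowerSeries

theorem tsum_le_div_of_succ_le_mul {u : ℕ → ℝ} {c : ℝ} (hu : ∀ n, 0 ≤ u n) (hc0 : 0 ≤ c)
    (hc : c < 1) (h : ∀ n, u (n + 1) ≤ c * u n) : ∑' n, u n ≤ u 0 / (1 - c) := by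
  have hle (n : ℕ) : u n ≤ c ^ n * u 0 := le_geom hc0 n fun k _ ↦ h k
  have hgeom : Summable fun n ↦ c ^ n * u 0 := (summable_geometric_of_lt_one hc0 hc).mul_right _
  calc ∑' n, u n ≤ ∑' n, c ^ n * u 0 := (hgeom.of_nonneg_of_le hu hle).tsum_le_tsum hle hgeom
    _ = u 0 / (1 - c) := by rw [tsum_mul_right, tsum_geometric_of_lt_one hc0 hc, inv_mul_eq_div]

theorem tsum_ne_zero_of_norm_succ_le {E : Type*} [NormedAddCommGroup E] [CompleteSpace E]
    {b : ℕ → E} {u : ℕ → ℝ} (hu : Summable u) (hb : ∀ n, ‖b (n + 1)‖ ≤ u n)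
    (hlt : ∑' n, u n < ‖b 0‖) : ∑' n, b n ≠ 0 := by
  rw [tsum_eq_zero_add' (.of_norm_bounded hu hb)]
  intro h0
  have : ‖b 0‖ ≤ ∑' n, u n := by
    rw [eq_neg_of_add_eq_zero_left h0, norm_neg]
    exact tsum_of_norm_bounded hu.hasSum hb
  linarith

theorem summable_norm_pow_triangle_mul_pow {q : ℂ} (hq : ‖q‖ < 1) (r : ℝ) :
    Summable fun n : ℕ ↦ ‖q ^ (n * (n + 1) / 2)‖ * r ^ n := by
  obtain ⟨m, hm⟩ := exists_pow_lt_of_lt_one (show 0 < 1 / (2 * (|r| + 1)) by positivity) hq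
  have hm' : ‖q‖ ^ m * |r| ≤ 1 / 2 := by
    rw [lt_div_iff₀ (by positivity)] at hm
    nlinarith [pow_nonneg (norm_nonneg q) m]
  refine .of_norm_bounded_eventually_nat summable_geometric_two ?_
  filter_upwards [Filter.eventually_ge_atTop (2 * m)] with n hn
  have hexp : m * n ≤ n * (n + 1) / 2 := by
    rw [Nat.le_div_iff_mul_le two_pos]
    nlinarith
  calc ‖‖q ^ (n * (n + 1) / 2)‖ * r ^ n‖ = ‖q‖ ^ (n * (n + 1) / 2) * |r| ^ n := by
        rw [norm_mul, norm_norm, norm_pow, norm_pow, Real.norm_eq_abs]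
    _ ≤ ‖q‖ ^ (m * n) * |r| ^ n := by
        gcongr ?_ * _
        exact pow_le_pow_of_le_one (norm_nonneg q) hq.le hexp
    _ = (‖q‖ ^ m * |r|) ^ n := by rw [pow_mul, mul_pow]
    _ ≤ (1 / 2) ^ n := by gcongr

/-- Majorant of `‖q‖⁻³ ‖(n + 2) (n + 3) q ^ T(n + 3) x ^ (n + 1)‖`, using
`T(n + 3) = 3 + (T(n) + 3 n + 3)`. -/
def thetaTailMajorant (n : ℕ) : ℝ :=
  (n + 2) * (n + 3) * 0.31 ^ (n * (n + 1) / 2 + 3 * n + 3) * 8.842 ^ (n + 1)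

theorem thetaTailMajorant_nonneg (n : ℕ) : 0 ≤ thetaTailMajorant n := by
  unfold thetaTailMajorant; positivity

theorem thetaTailMajorant_succ_le (n : ℕ) :
    thetaTailMajorant (n + 1) ≤ 1 / 6 * thetaTailMajorant n := by
  have hexp : (n + 1) * (n + 1 + 1) / 2 + 3 * (n + 1) + 3
      = (n * (n + 1) / 2 + 3 * n + 3) + (n + 4) := by
    rw [Nat.triangle_add n 1]
    ring
  have hpow : (0.31 : ℝ) ^ (n + 4) ≤ 0.31 ^ 4 :=
    pow_le_pow_of_le_one (by norm_num) (by norm_num) (by omega)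
  -- `2 · 0.31⁴ · 8.842 ≈ 0.1633 < 1/6`
  have hratio :
      ((n : ℝ) + 3) * (n + 4) * 0.31 ^ (n + 4) * 8.842 ≤ 1 / 6 * ((n + 2) * (n + 3)) := by
    have hn : (0 : ℝ) ≤ n := n.cast_nonneg
    calc ((n : ℝ) + 3) * (n + 4) * 0.31 ^ (n + 4) * 8.842
        ≤ ((n : ℝ) + 3) * (2 * (n + 2)) * 0.31 ^ 4 * 8.842 := by gcongr; linarith
      _ ≤ 1 / 6 * ((n + 2) * (n + 3)) := by nlinarith
  have hrest : (0 : ℝ) ≤ 0.31 ^ (n * (n + 1) / 2 + 3 * n + 3) * 8.842 ^ (n + 1) := by positivity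
  unfold thetaTailMajorant
  rw [hexp, pow_add, pow_succ (8.842 : ℝ) (n + 1)]
  push_cast
  linarith [mul_le_mul_of_nonneg_right hratio hrest]

theorem summable_thetaTailMajorant : Summable thetaTailMajorant :=
  summable_of_ratio_norm_eventually_le (r := 1 / 6) (by norm_num) <| .of_forall fun n ↦ by
    rw [Real.norm_of_nonneg (thetaTailMajorant_nonneg _),
      Real.norm_of_nonneg (thetaTailMajorant_nonneg _)]
    exact thetaTailMajorant_succ_le n

theorem tsum_thetaTailMajorant_lt_two : ∑' n, thetaTailMajorant n < 2 :=
  (tsum_le_div_of_succ_le_mul thetaTailMajorant_nonneg (by norm_num) (by norm_num)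
    thetaTailMajorant_succ_le).trans_lt (by norm_num [thetaTailMajorant])

theorem norm_derivCoeff_derivCoeff_theta_le {q x : ℂ} (hq : ‖q‖ ≤ 0.31) (hx : ‖x‖ ≤ 8.842)
    (n : ℕ) :
    ‖derivCoeff (derivCoeff fun j ↦ q ^ (j * (j + 1) / 2)) (n + 1) * x ^ (n + 1)‖
      ≤ ‖q‖ ^ 3 * thetaTailMajorant n := by
  have hexp : (n + 1 + 2) * (n + 1 + 2 + 1) / 2 = 3 + (n * (n + 1) / 2 + 3 * n + 3) := by
    rw [Nat.triangle_add n 3]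
    ring
  have hcast : ((n + 1 : ℕ) + 1 : ℂ) * ((n + 1 : ℕ) + 2) = ((n + 2) * (n + 3) : ℕ) := by
    push_cast; ring
  rw [derivCoeff_derivCoeff, hexp, hcast, norm_mul, norm_mul, norm_pow, norm_pow, pow_add,
    Complex.norm_natCast, thetaTailMajorant]
  push_cast
  calc ((n : ℝ) + 2) * (n + 3) * (‖q‖ ^ 3 * ‖q‖ ^ (n * (n + 1) / 2 + 3 * n + 3)) * ‖x‖ ^ (n + 1)
      ≤ ((n : ℝ) + 2) * (n + 3) * (‖q‖ ^ 3 * 0.31 ^ (n * (n + 1) / 2 + 3 * n + 3))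
        * 8.842 ^ (n + 1) := by gcongr
    _ = _ := by ring

/-- For 0 < |q| ≤ 0.31 and |x| ≤ 8.842, the second x-derivative of θ does not vanish. -/
theorem theta_xx_ne_zero (q x : ℂ) (hq : 0 < ‖q‖) (hq' : ‖q‖ ≤ 0.31)
    (hx : ‖x‖ ≤ 8.842) :
    iteratedDeriv 2 (theta q) x ≠ 0 := by
  have hcoeff := summable_norm_pow_triangle_mul_pow (hq'.trans_lt (by norm_num))
  rw [show theta q = fun w ↦ ∑' n, q ^ (n * (n + 1) / 2) * w ^ n from rfl,
    iteratedDeriv_tsum_mul_pow hcoeff]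
  refine tsum_ne_zero_of_norm_succ_le (summable_thetaTailMajorant.mul_left (‖q‖ ^ 3))
    (norm_derivCoeff_derivCoeff_theta_le hq' hx) ?_
  calc ∑' n, ‖q‖ ^ 3 * thetaTailMajorant n < 2 * ‖q‖ ^ 3 := by
        rw [tsum_mul_left, mul_comm 2]
        exact mul_lt_mul_of_pos_left tsum_thetaTailMajorant_lt_two (by positivity)
    _ = ‖derivCoeff^[2] (fun j ↦ q ^ (j * (j + 1) / 2)) 0 * x ^ 0‖ := by
        norm_num [derivCoeff_derivCoeff]
end

section
/- The polynomial V(q) = 256q¹⁰ − 192q⁷ − 128q⁶ + 288q⁵ − 60q⁴ − 80q³ + 52q² − 12q + 1 has exactly one root in the square {q ∈ ℂ : |Re q| ≤ 1/3, |Im q| ≤ 1/3}, namely a double root at λ₀ ≈ 0.309016994374947, and no other roots q with |Re q| ≤ 1/3 and |Im q| ≤ 1/3. -/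
open Polynomial

/-- V = 256q¹⁰ − 192q⁷ − 128q⁶ + 288q⁵ − 60q⁴ − 80q³ + 52q² − 12q + 1 as a polynomial. -/
noncomputable def Vpoly : Polynomial ℂ :=
  256 * X ^ 10 - 192 * X ^ 7 - 128 * X ^ 6 + 288 * X ^ 5 - 60 * X ^ 4
    - 80 * X ^ 3 + 52 * X ^ 2 - 12 * X + 1

/-- λ₀ = (√5 − 1)/4 ≈ 0.309016994374947. -/
noncomputable def lambda₀ : ℂ := ((Real.sqrt 5 - 1) / 4 : ℝ)

set_option maxHeartbeats 2000000 in
/-- In the square {|Re q| ≤ 1/3, |Im q| ≤ 1/3}, the only root of V is λ₀,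
and it is a double root. -/
theorem Vpoly_roots_in_square :
    Vpoly.rootMultiplicity lambda₀ = 2 ∧
    ∀ z : ℂ, |z.re| ≤ 1 / 3 → |z.im| ≤ 1 / 3 → Vpoly.eval z = 0 → z = lambda₀ := by
  set s := Real.sqrt 5 with hs_def
  have hs2 : s ^ 2 = 5 := Real.sq_sqrt (by norm_num)
  have hs0 : (0:ℝ) ≤ s := Real.sqrt_nonneg 5
  have hsgt : (2:ℝ) < s := by nlinarith
  have hslt : s < 7/3 := by nlinarith
  have ht : ((s-1)/2) ^ 2 = 1 - (s-1)/2 := by linear_combination hs2/4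
  have ht0 : (0:ℝ) ≤ (s-1)/2 := by linarith
  set α := Real.sqrt ((s-1)/2) with hα_def
  have hα : α ^ 2 = (s-1)/2 := Real.sq_sqrt ht0
  have hα0 : (0:ℝ) ≤ α := Real.sqrt_nonneg _
  have hαgt : (2:ℝ)/3 < α := by nlinarith
  have hαlt : α < (1+s)/4 := by nlinarith
  have hr : (4:ℝ) * ((s-1)/4)^2 + 2 * ((s-1)/4) - 1 = 0 := by linear_combination hs2/4
  have hL : lambda₀ = (((s-1)/4 : ℝ) : ℂ) := rfl
  have hAc : (4:ℂ) * lambda₀^2 + 2 * lambda₀ - 1 = 0 := by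
    rw [hL]; exact_mod_cast congrArg (fun x : ℝ => (x : ℂ)) hr
  have rb1 : (1+s)/2*(1-α)/2 + (1+s)/2*(1+α)/2 - α^2 = 1 := by
    linear_combination -hα
  have rb2 : α * ((1+s)/2*(1+α)/2 - (1+s)/2*(1-α)/2) = 1 := by
    linear_combination (1+(s-1)/2)*hα + ht
  have rb3 : (4:ℝ) * ((1+s)/2*(1-α)/2 * ((1+s)/2*(1+α)/2)) = 1 := by
    linear_combination (-(1+(s-1)/2)^2)*hα + (-(s-1)/2)*ht
  have hbpos : α^2/4 < (1+s)/2*(1-α)/2 := by nlinarith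
  have hgpos : α^2/4 < (1+s)/2*(1+α)/2 := by nlinarith
  set b : ℝ := (1+s)/2*(1-α)/2 with hb_def
  set g : ℝ := (1+s)/2*(1+α)/2 with hg_def
  have cb1 : ((b:ℝ):ℂ) + ((g:ℝ):ℂ) - ((α:ℝ):ℂ)^2 = 1 := by exact_mod_cast rb1
  have cb2 : ((α:ℝ):ℂ) * (((g:ℝ):ℂ) - ((b:ℝ):ℂ)) = 1 := by exact_mod_cast rb2
  have cb3 : (4:ℂ) * (((b:ℝ):ℂ) * ((g:ℝ):ℂ)) = 1 := by exact_mod_cast rb3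
  have q1 : ∀ z : ℂ, 4*z^2 + 2*z - 1 = 4*(z - lambda₀)*(z + lambda₀ + 1/2) := by
    intro z; linear_combination hAc
  have q2 : ∀ z : ℂ, 4*z^4 + 4*z^2 - 4*z + 1
      = 4*((z^2 - (α:ℂ)*z + (b:ℂ))*(z^2 + (α:ℂ)*z + (g:ℂ))) := by
    intro z; linear_combination (-4*z^2)*cb1 + (4*z)*cb2 - cb3
  have key : ∀ z : ℂ, 256*z^10 - 192*z^7 - 128*z^6 + 288*z^5 - 60*z^4 - 80*z^3
      + 52*z^2 - 12*z + 1
      = 64*(z-lambda₀)^2*(z+lambda₀+1/2)^2*(2*z-1)^2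
        *((z^2-(α:ℂ)*z+(b:ℂ))*(z^2+(α:ℂ)*z+(g:ℂ))) := by
    intro z
    calc 256*z^10 - 192*z^7 - 128*z^6 + 288*z^5 - 60*z^4 - 80*z^3 + 52*z^2 - 12*z + 1
        = (4*z^2+2*z-1)^2 * (2*z-1)^2 * (4*z^4+4*z^2-4*z+1) := by ring
      _ = (4*(z - lambda₀)*(z + lambda₀ + 1/2))^2 * (2*z-1)^2
          * (4*((z^2 - (α:ℂ)*z + (b:ℂ))*(z^2 + (α:ℂ)*z + (g:ℂ)))) := by rw [q1 z, q2 z]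
      _ = 64*(z-lambda₀)^2*(z+lambda₀+1/2)^2*(2*z-1)^2
          *((z^2-(α:ℂ)*z+(b:ℂ))*(z^2+(α:ℂ)*z+(g:ℂ))) := by ring
  constructor
  · -- root multiplicity
    set Q : ℂ[X] := 4 * (2*X + 2*C lambda₀ + 1)^2 * (2*X - 1)^2
        * (4*X^4 + 4*X^2 - 4*X + 1) with hQ_def
    have hCA : 4*(C lambda₀ : ℂ[X])^2 + 2*(C lambda₀) - 1 = 0 := by
      have := congrArg (C : ℂ →+* ℂ[X]) hAc
      simpa [map_add, map_sub, map_mul, map_pow, map_ofNat] using this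
    have hfact : Vpoly = (X - C lambda₀)^2 * Q := by
      rw [Vpoly, hQ_def]
      linear_combination ((8*(X:ℂ[X])^2 + 4*X - 4*(C lambda₀)^2 - 2*C lambda₀ - 1)
        * (2*X-1)^2 * (4*X^4+4*X^2-4*X+1)) * hCA
    have hQeval : Q.eval lambda₀ ≠ 0 := by
      rw [hQ_def]
      simp only [eval_mul, eval_add, eval_sub, eval_pow, eval_C, eval_X, eval_one,
        eval_ofNat]
      have hs3 : s^3 = 5*s := by linear_combination s*hs2
      have hs4 : s^4 = 25 := by linear_combination (s^2+5)*hs2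
      have h1 : 2*lambda₀ + 2*lambda₀ + (1:ℂ) ≠ 0 := by
        rw [hL, show 2*(((s-1)/4:ℝ):ℂ) + 2*(((s-1)/4:ℝ):ℂ) + 1 = ((s:ℝ):ℂ) by
          push_cast; ring]
        exact Complex.ofReal_ne_zero.mpr (by intro hh; linarith)
      have h2 : 2*lambda₀ - 1 ≠ 0 := by
        rw [hL, show 2*(((s-1)/4:ℝ):ℂ) - 1 = (((s-3)/2:ℝ):ℂ) by push_cast; ring]
        exact Complex.ofReal_ne_zero.mpr (by intro hh; linarith)
      have h3 : 4*lambda₀^4 + 4*lambda₀^2 - 4*lambda₀ + 1 ≠ 0 := by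
        rw [hL, show 4*((((s-1)/4:ℝ)):ℂ)^4 + 4*((((s-1)/4:ℝ)):ℂ)^2 - 4*((((s-1)/4:ℝ)):ℂ) + 1
            = ((4*((s-1)/4)^4 + 4*((s-1)/4)^2 - 4*((s-1)/4) + 1 : ℝ):ℂ) by push_cast; ring]
        exact Complex.ofReal_ne_zero.mpr (by intro hh; nlinarith [hs2, hs3, hs4, hslt])
      intro h
      rcases mul_eq_zero.mp h with h' | h'
      · rcases mul_eq_zero.mp h' with h'' | h''
        · rcases mul_eq_zero.mp h'' with h3' | h3'
          · norm_num at h3'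
          · exact h1 (pow_eq_zero_iff (by norm_num) |>.mp h3')
        · exact h2 (pow_eq_zero_iff (by norm_num) |>.mp h'')
      · exact h3 h'
    have hQ0 : Q ≠ 0 := fun h => hQeval (by rw [h]; simp)
    have hne : (X - C lambda₀)^2 * Q ≠ 0 :=
      mul_ne_zero (pow_ne_zero _ (X_sub_C_ne_zero lambda₀)) hQ0
    rw [hfact, rootMultiplicity_mul hne, rootMultiplicity_X_sub_C_pow,
      rootMultiplicity_eq_zero hQeval]
  · intro z hre him hev
    rw [Vpoly] at hev
    simp only [eval_add, eval_sub, eval_mul, eval_pow, eval_ofNat, eval_X, eval_one] at hev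
    have hz : 64*(z-lambda₀)^2*(z+lambda₀+1/2)^2*(2*z-1)^2
        *((z^2-(α:ℂ)*z+(b:ℂ))*(z^2+(α:ℂ)*z+(g:ℂ))) = 0 := by
      rw [← key z]; linear_combination hev
    rw [abs_le] at hre him
    rcases mul_eq_zero.mp hz with h | h
    · rcases mul_eq_zero.mp h with h | h
      · rcases mul_eq_zero.mp h with h | h
        · rcases mul_eq_zero.mp h with h | h
          · norm_num at h
          · exact sub_eq_zero.mp (pow_eq_zero_iff (by norm_num) |>.mp h)
        · exfalso
          have hz' : z = -lambda₀ - 1/2 := by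
            have h0 := pow_eq_zero_iff (n := 2) (by norm_num) |>.mp h
            linear_combination h0
          have hzre : z.re = -((s-1)/4) - 1/2 := by
            rw [hz', hL]; simp
          rw [hzre] at hre
          linarith [hre.1]
      · exfalso
        have hz' : z = 1/2 := by
          have h0 := pow_eq_zero_iff (n := 2) (by norm_num) |>.mp h
          linear_combination h0/2
        have hzre : z.re = 1/2 := by rw [hz']; norm_num
        rw [hzre] at hre
        linarith [hre.2]
    · exfalso
      rcases mul_eq_zero.mp h with h | h
      · have hIm : z.im * (2*z.re - α) = 0 := by
          have h' := congrArg Complex.im h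
          simp only [pow_two, Complex.add_im, Complex.sub_im,
            Complex.mul_im, Complex.ofReal_im, Complex.ofReal_re, Complex.zero_im] at h'
          linarith [h']
        rcases mul_eq_zero.mp hIm with hy | hx
        · have hRe := congrArg Complex.re h
          simp only [pow_two, Complex.add_re, Complex.sub_re,
            Complex.mul_re, Complex.ofReal_im, Complex.ofReal_re, Complex.zero_re] at hRe
          rw [hy] at hRe
          nlinarith [sq_nonneg (z.re - α/2), hbpos, hRe]
        · have : z.re = α/2 := by linarith
          rw [this] at hre
          linarith [hre.2]
      · have hIm : z.im * (2*z.re + α) = 0 := by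
          have h' := congrArg Complex.im h
          simp only [pow_two, Complex.add_im, Complex.sub_im,
            Complex.mul_im, Complex.ofReal_im, Complex.ofReal_re, Complex.zero_im] at h'
          linarith [h']
        rcases mul_eq_zero.mp hIm with hy | hx
        · have hRe := congrArg Complex.re h
          simp only [pow_two, Complex.add_re, Complex.sub_re,
            Complex.mul_re, Complex.ofReal_im, Complex.ofReal_re, Complex.zero_re] at hRe
          rw [hy] at hRe
          nlinarith [sq_nonneg (z.re + α/2), hgpos, hRe]
        · have : z.re = -(α/2) := by linarith
          rw [this] at hre
          linarith [hre.1]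
end
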